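/- arXiv:1806.07024 — 8 statements merged into one kernel-verified Lean document; each statement's English description precedes it below -/
import Mathlib

section
/- Let φ be a skew-morphism of a finite group A. For every element x ∈ A, the orbit of φ containing x⁻¹ equals the set of inverses of elements in the orbit of φ containing x, i.e., O_{x⁻¹} = (O_x)⁻¹. -/
/-- For a skew-morphism `φ` of a finite group `A`, the orbit of `x⁻¹` under `φ` is the
set of inverses of elements of the orbit of `x`. -/
theorem skew_morphism_orbit_inv (A : Type*) [Group A] [Finite A]
    (φ : Equiv.Perm A) (π : A → ℤ)
    (hone : φ 1 = 1)
    (hskew : ∀ x y : A, φ (x * y) = φ x * (φ ^ π x) y) :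
    ∀ x : A, {y : A | ∃ k : ℕ, (φ ^ k) x⁻¹ = y} = {y : A | ∃ k : ℕ, (φ ^ k) x = y}⁻¹ := by
  -- iterated skew-morphism property
  have hpow : ∀ (n : ℕ) (x : A), ∃ z : ℤ, ∀ y : A,
      (φ ^ n) (x * y) = (φ ^ n) x * (φ ^ z) y := by
    intro n x
    induction n with
    | zero => exact ⟨0, fun y => by simp⟩
    | succ n ih =>
      obtain ⟨z, hz⟩ := ih
      refine ⟨π ((φ ^ n) x) + z, fun y => ?_⟩
      have h1 : (φ ^ (n + 1) : Equiv.Perm A) = φ * φ ^ n := by rw [pow_succ']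
      have h2 : (φ ^ (π ((φ ^ n) x) + z) : Equiv.Perm A)
          = φ ^ (π ((φ ^ n) x)) * φ ^ z := zpow_add φ _ _
      rw [h1, h2, Equiv.Perm.mul_apply, hz, hskew, Equiv.Perm.mul_apply]
      rfl
  have hone_pow : ∀ n : ℕ, (φ ^ n) (1 : A) = 1 := by
    intro n
    induction n with
    | zero => simp
    | succ n ih =>
      rw [pow_succ', Equiv.Perm.mul_apply, ih, hone]
  -- convert integer powers to natural powers using finiteness
  have hzt : ∀ z : ℤ, ∃ k : ℕ, (φ ^ z : Equiv.Perm A) = φ ^ k := by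
    intro z
    have hpos : 0 < orderOf φ := orderOf_pos φ
    refine ⟨(z % (orderOf φ : ℤ)).toNat, ?_⟩
    have hnn : 0 ≤ z % (orderOf φ : ℤ) :=
      Int.emod_nonneg z (by exact_mod_cast hpos.ne')
    rw [← zpow_natCast, Int.toNat_of_nonneg hnn, zpow_mod_orderOf]
  -- one inclusion
  have hsub : ∀ x : A, {y : A | ∃ k : ℕ, (φ ^ k) x = y}⁻¹ ⊆
      {y : A | ∃ k : ℕ, (φ ^ k) x⁻¹ = y} := by
    intro x y hy
    obtain ⟨n, hn⟩ := hy
    obtain ⟨z, hz⟩ := hpow n x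
    have h1 := hz x⁻¹
    rw [mul_inv_cancel, hone_pow] at h1
    have h2 : (φ ^ z) x⁻¹ = ((φ ^ n) x)⁻¹ :=
      (inv_eq_of_mul_eq_one_right h1.symm).symm
    obtain ⟨k, hk⟩ := hzt z
    refine ⟨k, ?_⟩
    rw [← hk, h2, hn, inv_inv]
  intro x
  apply Set.Subset.antisymm
  · intro y hy
    rw [Set.mem_inv]
    have : y⁻¹ ∈ {y : A | ∃ k : ℕ, (φ ^ k) x⁻¹ = y}⁻¹ := by
      rw [Set.mem_inv, inv_inv]; exact hy
    have h := hsub x⁻¹ this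
    rwa [inv_inv] at h
  · exact hsub x
end

section
/- Let φ be a skew-morphism of a finite group A with power function π, and let n be the order of φ (as a permutation of A). Then for every x ∈ A, Σ_{i=1}^{n} π(φ^{i-1}(x)) ≡ 0 (mod n). -/
/-- For a skew-morphism `φ` of a finite group `A` with power function `π` and order `n`,
one has `Σ_{i=1}^n π(φ^{i-1}(x)) ≡ 0 (mod n)` for every `x ∈ A`. -/
theorem skew_morphism_power_sum (A : Type*) [Group A] [Finite A]
    (φ : Equiv.Perm A) (π : A → ℤ)
    (hone : φ 1 = 1)
    (hskew : ∀ x y : A, φ (x * y) = φ x * (φ ^ π x) y)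
    (n : ℕ) (hn : n = orderOf φ) :
    ∀ x : A, (n : ℤ) ∣ ∑ i ∈ Finset.range n, π ((φ ^ i) x) := by
  have key : ∀ (k : ℕ) (x y : A),
      (φ ^ k) (x * y) = (φ ^ k) x * (φ ^ (∑ i ∈ Finset.range k, π ((φ ^ i) x))) y := by
    intro k
    induction k with
    | zero => intro x y; simp
    | succ k ih =>
      intro x y
      have h1 : (φ ^ (k + 1)) (x * y) = φ ((φ ^ k) (x * y)) := by
        rw [pow_succ', Equiv.Perm.mul_apply]
      have h2 : (φ ^ (k + 1)) x = φ ((φ ^ k) x) := by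
        rw [pow_succ', Equiv.Perm.mul_apply]
      rw [h1, ih, hskew, h2, Finset.sum_range_succ, add_comm, zpow_add,
        Equiv.Perm.mul_apply]
  subst hn
  intro x
  have hpow : φ ^ orderOf φ = 1 := pow_orderOf_eq_one φ
  have h := key (orderOf φ) x
  rw [hpow] at h
  have hid : (φ ^ (∑ i ∈ Finset.range (orderOf φ), π ((φ ^ i) x))) = 1 := by
    ext y
    have := h y
    simpa using (mul_left_cancel this.symm)
  exact orderOf_dvd_iff_zpow_eq_one.mpr hid
end

section
/- Let G be a finite group with subgroups A and B such that G = AB, B is cyclic generated by b, and A ∩ B = 1. Define φ: A → A and π: A → ℤ_{|b|} by the rule bx = φ(x)·b^{π(x)} for each x ∈ A (these are well-defined since every element of G = BA has a unique expression as an element of A times a power of b). Then φ is a skew-morphism of A with power function π. -/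
/-- Let `G = AB` be a finite group with `B = ⟨b⟩` cyclic and `A ∩ B = 1`. The maps
`φ : A → A` and `π : A → ℤ_{|b|}` defined by the rule `b·x = φ(x)·b^{π(x)}` form a
skew-morphism of `A` with power function `π`. -/
theorem complement_induces_skew_morphism (G : Type*) [Group G] [Finite G]
    (A : Subgroup G) (b : G)
    (hfact : ∀ g : G, ∃ x ∈ A, ∃ k : ℤ, g = x * b ^ k)
    (hint : A ⊓ Subgroup.zpowers b = ⊥)
    (φ : A → A) (π : A → ZMod (orderOf b))
    (hdef : ∀ x : A, b * (x : G) = (φ x : G) * b ^ (π x).val) :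
    Function.Bijective φ ∧ φ 1 = 1 ∧
      ∀ x y : A, φ (x * y) = φ x * φ^[(π x).val] y := by
  -- key: an element of A which is a power of b is trivial
  have key : ∀ (x : A) (k : ℤ), (x : G) = b ^ k → x = 1 := by
    intro x k h
    have hm : (x : G) ∈ A ⊓ Subgroup.zpowers b := ⟨x.2, ⟨k, h.symm⟩⟩
    rw [hint, Subgroup.mem_bot] at hm
    exact Subtype.ext hm
  -- uniqueness of decomposition
  have uniq : ∀ (x y : A) (k l : ℤ), (x : G) * b ^ k = (y : G) * b ^ l → x = y := by
    intro x y k l h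
    have hxeq : (x : G) = (y : G) * b ^ l * (b ^ k)⁻¹ := by rw [← h]; group
    have : ((y⁻¹ * x : A) : G) = b ^ (l - k) := by push_cast; rw [hxeq]; group
    have := key _ _ this
    have h1 : y⁻¹ * x = 1 := this
    exact (eq_of_inv_mul_eq_one h1).symm
  -- step lemma
  have step : ∀ (n : ℕ) (y : A), ∃ c : ℕ, b ^ n * (y : G) = (φ^[n] y : G) * b ^ c := by
    intro n
    induction n with
    | zero => intro y; exact ⟨0, by simp⟩
    | succ n ih =>
      intro y
      obtain ⟨c, hc⟩ := ih y
      refine ⟨(π (φ^[n] y)).val + c, ?_⟩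
      rw [pow_succ']
      calc b * b ^ n * (y : G) = b * (b ^ n * (y : G)) := by group
        _ = b * ((φ^[n] y : G) * b ^ c) := by rw [hc]
        _ = (b * (φ^[n] y : G)) * b ^ c := by group
        _ = ((φ (φ^[n] y) : G) * b ^ (π (φ^[n] y)).val) * b ^ c := by rw [hdef]
        _ = (φ^[n + 1] y : G) * b ^ ((π (φ^[n] y)).val + c) := by
            rw [Function.iterate_succ_apply', pow_add]; group
  have hφ1 : φ 1 = 1 := by
    have h1 := hdef 1
    simp only [OneMemClass.coe_one, mul_one] at h1
    have : ((1 : A) : G) * b ^ (1 : ℤ) = (φ 1 : G) * b ^ ((π 1).val : ℤ) := by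
      push_cast; simpa using h1
    exact (uniq _ _ _ _ this).symm
  have hinj : Function.Injective φ := by
    intro x y hxy
    have hx := hdef x
    have hy := hdef y
    have hxg : (x : G) = b⁻¹ * (φ x : G) * b ^ (π x).val := by
      rw [mul_assoc, ← hx]; group
    have hyg : (y : G) = b⁻¹ * (φ y : G) * b ^ (π y).val := by
      rw [mul_assoc, ← hy]; group
    have : ((x⁻¹ * y : A) : G) = b ^ (((π y).val : ℤ) - ((π x).val : ℤ)) := by
      push_cast
      rw [hxg, hyg, hxy, zpow_sub]
      group
    have := key _ _ this
    have h1 : x⁻¹ * y = 1 := this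
    exact eq_of_inv_mul_eq_one h1
  refine ⟨Finite.injective_iff_bijective.mp hinj, hφ1, ?_⟩
  intro x y
  obtain ⟨c, hc⟩ := step (π x).val y
  have hmain : ((φ (x * y) : A) : G) * b ^ ((π (x * y)).val : ℤ)
      = ((φ x * φ^[(π x).val] y : A) : G) * b ^ (c : ℤ) := by
    rw [zpow_natCast, zpow_natCast]
    push_cast
    have h1 : b * ((x : G) * (y : G)) = (φ (x * y) : G) * b ^ (π (x * y)).val := by
      simpa using hdef (x * y)
    have h2 : b * ((x : G) * (y : G)) = (φ x : G) * ((φ^[(π x).val] y : A) : G) * b ^ c := by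
      calc b * ((x : G) * (y : G)) = (b * (x : G)) * (y : G) := by group
        _ = ((φ x : G) * b ^ (π x).val) * (y : G) := by rw [hdef]
        _ = (φ x : G) * (b ^ (π x).val * (y : G)) := by group
        _ = (φ x : G) * (((φ^[(π x).val] y : A) : G) * b ^ c) := by rw [hc]
        _ = (φ x : G) * ((φ^[(π x).val] y : A) : G) * b ^ c := by group
    rw [← h1, h2]
  exact uniq _ _ _ _ hmain
end

section
/- Let G be a finite group generated by elements a of order m and b of order n with ⟨a⟩ ∩ ⟨b⟩ = 1 and |G| = mn. If for every x ∈ ℤ we write a·b^x = b^{φ(x)}·a^{π(x)} (with φ(x) ∈ ℤ_n and π(x) ∈ ℤ_m uniquely determined), then φ is a bijection of ℤ_n fixing 0, and φ(x₁ + x₂) = φ(x₁) + φ^{π(x₁)}(x₂) for all x₁, x₂ ∈ ℤ_n; i.e., φ is a skew-morphism of ℤ_n with power function π. -/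
/-- In an exact bicyclic group `G = ⟨a⟩⟨b⟩` with `|a| = m`, `|b| = n`, the map `φ` defined
by `a·b^x = b^{φ(x)}·a^{π(x)}` is a bijection of `ℤ_n` fixing `0` and satisfies
`φ(x₁+x₂) = φ(x₁) + φ^{π(x₁)}(x₂)`, i.e. it is a skew-morphism of `ℤ_n` with power
function `π`. -/
theorem exact_bicyclic_induced_skew_morphism (G : Type*) [Group G] [Finite G]
    (a b : G) (m n : ℕ) (hm : orderOf a = m) (hn : orderOf b = n)
    (hmpos : 0 < m) (hnpos : 0 < n)
    (hgen : Subgroup.closure {a, b} = ⊤)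
    (hint : Subgroup.zpowers a ⊓ Subgroup.zpowers b = ⊥)
    (hcard : Nat.card G = m * n)
    (φ : ZMod n → ZMod n) (π : ZMod n → ZMod m)
    (hdef : ∀ x : ZMod n, a * b ^ x.val = b ^ (φ x).val * a ^ (π x).val) :
    Function.Bijective φ ∧ φ 0 = 0 ∧
      ∀ x₁ x₂ : ZMod n, φ (x₁ + x₂) = φ x₁ + φ^[(π x₁).val] x₂ := by
  have hnz : NeZero n := ⟨hnpos.ne'⟩
  -- Key lemma: if `b^s = b^t * a^j` then `s ≡ t (mod n)`.
  have key : ∀ s t j : ℤ, b ^ s = b ^ t * a ^ j → ((s : ZMod n) = (t : ZMod n)) := by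
    intro s t j h
    have h1 : b ^ (s - t) = a ^ j := by
      have e : b ^ (s - t) = b ^ (-t) * b ^ s := by
        rw [← zpow_add, neg_add_eq_sub]
      rw [e, h]; group
    have h2 : b ^ (s - t) ∈ Subgroup.zpowers a ⊓ Subgroup.zpowers b :=
      ⟨h1 ▸ Subgroup.zpow_mem_zpowers a j, Subgroup.zpow_mem_zpowers b _⟩
    rw [hint, Subgroup.mem_bot] at h2
    have h3 : (n : ℤ) ∣ s - t := by
      rw [← hn]; exact orderOf_dvd_iff_zpow_eq_one.mpr h2
    have h4 := (ZMod.intCast_zmod_eq_zero_iff_dvd (s - t) n).mpr h3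
    push_cast at h4
    exact sub_eq_zero.mp h4
  -- iterated conjugation lemma
  have pow_lemma : ∀ (k : ℕ) (x : ZMod n), ∃ j : ℤ,
      a ^ k * b ^ (x.val) = b ^ ((φ^[k] x).val) * a ^ j := by
    intro k
    induction k with
    | zero => intro x; exact ⟨0, by simp⟩
    | succ k ih =>
      intro x
      obtain ⟨j, hj⟩ := ih x
      refine ⟨((π (φ^[k] x)).val : ℤ) + j, ?_⟩
      rw [Function.iterate_succ_apply']
      calc a ^ (k + 1) * b ^ x.val = a * (a ^ k * b ^ x.val) := by
            rw [pow_succ']; group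
        _ = a * (b ^ ((φ^[k] x).val) * a ^ j) := by rw [hj]
        _ = (a * b ^ ((φ^[k] x).val)) * a ^ j := by group
        _ = (b ^ ((φ (φ^[k] x)).val) * a ^ ((π (φ^[k] x)).val)) * a ^ j := by
            rw [hdef (φ^[k] x)]
        _ = b ^ ((φ (φ^[k] x)).val) * a ^ (((π (φ^[k] x)).val : ℤ) + j) := by group
  -- injectivity
  have hinj : Function.Injective φ := by
    intro x y hxy
    have hx := hdef x
    have hy := hdef y
    rw [hxy] at hx
    have e1 : b ^ (x.val) = a⁻¹ * (b ^ ((φ y).val) * a ^ ((π x).val)) := by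
      rw [← hx]; group
    have e2 : b ^ (y.val) = a⁻¹ * (b ^ ((φ y).val) * a ^ ((π y).val)) := by
      rw [← hy]; group
    have h : b ^ ((x.val : ℤ)) = b ^ ((y.val : ℤ)) * a ^ (((π x).val : ℤ) - (π y).val) := by
      rw [zpow_natCast, zpow_natCast, e1, e2]
      group
    have := key _ _ _ h
    simpa [ZMod.natCast_val, ZMod.cast_id] using this
  -- φ 0 = 0
  have h0 : φ 0 = 0 := by
    have h := hdef 0
    rw [show (0 : ZMod n).val = 0 from ZMod.val_zero, pow_zero, mul_one] at h
    have h' : b ^ ((φ 0).val) * a ^ ((π 0).val) = a := h.symm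
    have h'' : b ^ ((φ 0).val) = a * (a ^ ((π 0).val))⁻¹ := eq_mul_inv_of_mul_eq h'
    have hkey : b ^ (((φ 0).val : ℤ)) = b ^ ((0 : ℤ)) * a ^ ((1 : ℤ) - ((π 0).val : ℤ)) := by
      rw [zpow_natCast, h'']
      group
    have := key _ _ _ hkey
    simpa [ZMod.natCast_val, ZMod.cast_id] using this
  -- skew-morphism identity
  have hskew : ∀ x₁ x₂ : ZMod n, φ (x₁ + x₂) = φ x₁ + φ^[(π x₁).val] x₂ := by
    intro x₁ x₂
    obtain ⟨j, hj⟩ := pow_lemma ((π x₁).val) x₂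
    have hsum : b ^ ((x₁ + x₂).val) = b ^ (x₁.val) * b ^ (x₂.val) := by
      rw [← pow_add]
      apply pow_eq_pow_iff_modEq.mpr
      rw [hn, ZMod.val_add]
      exact Nat.mod_modEq _ n
    have hmain : b ^ ((φ x₁).val) * b ^ ((φ^[(π x₁).val] x₂).val) * a ^ j
        = b ^ ((φ (x₁ + x₂)).val) * a ^ ((π (x₁ + x₂)).val) := by
      calc b ^ ((φ x₁).val) * b ^ ((φ^[(π x₁).val] x₂).val) * a ^ j
          = b ^ ((φ x₁).val) * (b ^ ((φ^[(π x₁).val] x₂).val) * a ^ j) := by group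
        _ = b ^ ((φ x₁).val) * (a ^ ((π x₁).val) * b ^ (x₂.val)) := by rw [← hj]
        _ = (b ^ ((φ x₁).val) * a ^ ((π x₁).val)) * b ^ (x₂.val) := by group
        _ = (a * b ^ (x₁.val)) * b ^ (x₂.val) := by rw [← hdef x₁]
        _ = a * (b ^ (x₁.val) * b ^ (x₂.val)) := by group
        _ = a * b ^ ((x₁ + x₂).val) := by rw [← hsum]
        _ = b ^ ((φ (x₁ + x₂)).val) * a ^ ((π (x₁ + x₂)).val) := hdef _
    have hkey : b ^ (((φ (x₁ + x₂)).val : ℤ))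
        = b ^ (((φ x₁).val : ℤ) + ((φ^[(π x₁).val] x₂).val : ℤ))
          * a ^ (j - ((π (x₁ + x₂)).val : ℤ)) := by
      calc b ^ (((φ (x₁ + x₂)).val : ℤ))
          = (b ^ ((φ (x₁ + x₂)).val) * a ^ ((π (x₁ + x₂)).val))
              * (a ^ ((π (x₁ + x₂)).val))⁻¹ := by group
        _ = (b ^ ((φ x₁).val) * b ^ ((φ^[(π x₁).val] x₂).val) * a ^ j)
              * (a ^ ((π (x₁ + x₂)).val))⁻¹ := by rw [hmain]
        _ = _ := by group
    have := key _ _ _ hkey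
    push_cast [ZMod.natCast_val, ZMod.cast_id] at this
    exact this
  exact ⟨Finite.injective_iff_bijective.mp hinj, h0, hskew⟩
end

section
/- Let m and n be positive integers with gcd(n, φ(m)) ≠ 1, where φ is Euler's totient function. Then there exists a non-abelian group G of order mn that factorises as G = ⟨a⟩⟨b⟩ with |a| = m, |b| = n, and ⟨a⟩ ∩ ⟨b⟩ = 1. -/
/-!
Let `p` be a prime dividing `n` and `φ(m)`. The automorphism group of the cyclic group `C_m` has
order `φ(m)`, so by Cauchy's theorem it contains an automorphism `σ` of order `p`, and `σ ≠ 1`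
moves the generator `a` of `C_m`. Since `p ∣ n`, sending the generator `b` of `C_n` to `σ` defines
an action of `C_n` on `C_m`; in the semidirect product `C_m ⋊ C_n` every element is uniquely
`aⁱ bʲ`, and `b a b⁻¹ = σ a ≠ a`.
-/

open Multiplicative Subgroup

namespace SemidirectProduct

variable {N H : Type*} [Group N] [Group H] {φ : H →* MulAut N}

instance [Finite N] [Finite H] : Finite (N ⋊[φ] H) :=
  Finite.of_equiv _ equivProd.symm

theorem range_inl_inf_range_inr : (inl : N →* N ⋊[φ] H).range ⊓ inr.range = ⊥ := by
  refine eq_bot_iff.mpr fun g ⟨⟨x, hx⟩, ⟨y, hy⟩⟩ => mem_bot.mpr ?_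
  ext
  · rw [← hy, left_inr, one_left]
  · rw [← hx, right_inl, one_right]

theorem zpowers_inl_inf_zpowers_inr (x : N) (y : H) :
    zpowers (inl x : N ⋊[φ] H) ⊓ zpowers (inr y) = ⊥ :=
  eq_bot_iff.mpr <| (inf_le_inf (zpowers_le.mpr (MonoidHom.mem_range.mpr ⟨x, rfl⟩))
    (zpowers_le.mpr (MonoidHom.mem_range.mpr ⟨y, rfl⟩))).trans range_inl_inf_range_inr.le

theorem inl_mul_inr_ne_inr_mul_inl {x : N} {y : H} (h : φ y x ≠ x) :
    (inl x : N ⋊[φ] H) * inr y ≠ inr y * inl x := fun heq =>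
  h (by simpa using congrArg left heq.symm)

theorem exists_eq_inl_zpow_mul_inr_zpow {a : N} {b : H} (ha : ∀ x, x ∈ zpowers a)
    (hb : ∀ y, y ∈ zpowers b) (g : N ⋊[φ] H) : ∃ i j : ℤ, g = inl a ^ i * inr b ^ j := by
  obtain ⟨i, hi⟩ := mem_zpowers_iff.mp (ha g.left)
  obtain ⟨j, hj⟩ := mem_zpowers_iff.mp (hb g.right)
  exact ⟨i, j, by rw [← map_zpow, ← map_zpow, hi, hj, inl_left_mul_inr_right]⟩

end SemidirectProduct

theorem ZMod.mem_zpowers_ofAdd_one {n : ℕ} (x : Multiplicative (ZMod n)) :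
    x ∈ zpowers (ofAdd (1 : ZMod n)) :=
  mem_zpowers_iff.mpr
    ⟨(toAdd x).cast, by rw [← ofAdd_zsmul, zsmul_one, ZMod.intCast_zmod_cast]; rfl⟩

theorem ZMod.orderOf_ofAdd_one (n : ℕ) : orderOf (ofAdd (1 : ZMod n)) = n := by
  rw [orderOf_ofAdd_eq_addOrderOf, ZMod.addOrderOf_one]

theorem MulAut.apply_ne_self_of_ne_one {N : Type*} [Group N] {a : N} (ha : ∀ x, x ∈ zpowers a)
    {σ : MulAut N} (hσ : σ ≠ 1) : σ a ≠ a :=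
  fun h => hσ ((MulEquiv.eq_iff_eq_on_generator ha σ 1).mpr h)

theorem IsCyclic.exists_mulAut_ne_one_orderOf_dvd (N : Type*) [Group N] [Finite N] [IsCyclic N]
    {n : ℕ} (h : n.gcd (Nat.card N).totient ≠ 1) : ∃ σ : MulAut N, σ ≠ 1 ∧ orderOf σ ∣ n := by
  set p := (n.gcd (Nat.card N).totient).minFac
  have hp : p.Prime := Nat.minFac_prime h
  have : Fact p.Prime := ⟨hp⟩
  obtain ⟨σ, hσ⟩ := exists_prime_orderOf_dvd_card' (G := MulAut N) p <| by
    rw [IsCyclic.card_mulAut]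
    exact (Nat.minFac_dvd _).trans (Nat.gcd_dvd_right _ _)
  refine ⟨σ, fun h1 => hp.one_lt.ne' ?_, hσ ▸ (Nat.minFac_dvd _).trans (Nat.gcd_dvd_left _ _)⟩
  rw [← hσ, h1, orderOf_one]

/-- If `gcd(n, φ(m)) ≠ 1`, there exists a non-abelian group of order `mn` that
factorises as an exact product of cyclic subgroups of orders `m` and `n`. -/
theorem exists_nonabelian_exact_bicyclic (m n : ℕ) (hm : 0 < m) (hn : 0 < n)
    (h : Nat.gcd n (Nat.totient m) ≠ 1) :
    ∃ (G : Type) (_ : Group G) (_ : Finite G) (a b : G),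
      (∃ x y : G, x * y ≠ y * x) ∧
      Nat.card G = m * n ∧ orderOf a = m ∧ orderOf b = n ∧
      Subgroup.zpowers a ⊓ Subgroup.zpowers b = ⊥ ∧
      ∀ g : G, ∃ i j : ℤ, g = a ^ i * b ^ j := by
  have : NeZero m := ⟨hm.ne'⟩
  have : NeZero n := ⟨hn.ne'⟩
  obtain ⟨σ, hσ1, hσn⟩ :=
    IsCyclic.exists_mulAut_ne_one_orderOf_dvd (Multiplicative (ZMod m)) (by simpa using h)
  let φ := monoidHomOfForallMemZpowers ZMod.mem_zpowers_ofAdd_one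
    (by rwa [ZMod.orderOf_ofAdd_one] : orderOf σ ∣ orderOf (ofAdd (1 : ZMod n)))
  have hφ : φ (ofAdd 1) (ofAdd 1) ≠ ofAdd 1 := by
    rw [monoidHomOfForallMemZpowers_apply_gen]
    exact MulAut.apply_ne_self_of_ne_one ZMod.mem_zpowers_ofAdd_one hσ1
  open SemidirectProduct in
  refine ⟨Multiplicative (ZMod m) ⋊[φ] Multiplicative (ZMod n), inferInstance, inferInstance,
    inl (ofAdd 1), inr (ofAdd 1), ⟨_, _, inl_mul_inr_ne_inr_mul_inl hφ⟩, by simp [card],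
    by rw [orderOf_injective _ inl_injective, ZMod.orderOf_ofAdd_one],
    by rw [orderOf_injective _ inr_injective, ZMod.orderOf_ofAdd_one],
    zpowers_inl_inf_zpowers_inr _ _,
    exists_eq_inl_zpow_mul_inr_zpow ZMod.mem_zpowers_ofAdd_one ZMod.mem_zpowers_ofAdd_one⟩
end

section
/- Let φ: ℤ_n → ℤ_n be the automorphism x ↦ rx where gcd(r, n) = 1, and let m be the multiplicative order of r modulo n. Then φ is a symmetric skew-morphism of ℤ_n if and only if m divides n and r ≡ 1 (mod m). -/
/-!
Write `u` for the unit `r` of `ℤ_n`. Since `φ^k = (r ^ k * ·)`, the skew-morphism identity (take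
`y = 1`) says exactly that `r ^ π(x) = r`, i.e. `π(x) ≡ 1 (mod m)`, where `π(x)` is `u^{-x}` read
as a natural number below `n`. When `m ∣ n` this congruence can be read in `ℤ_m`, where it becomes
`ū^{-x} = 1` for the image `ū = r mod m` of `u`. As `ū^n = 1`, the choice `x = -1` forces `ū = 1`,
i.e. `r ≡ 1 (mod m)`; conversely `ū = 1` gives the congruence for every `x`.
-/

theorem forall_mul_add_eq_mul_add_pow_mul_iff {R : Type*} [Ring R] (a : R) (e : R → ℕ) :
    (∀ x y : R, a * (x + y) = a * x + a ^ e x * y) ↔ ∀ x, a ^ e x = a := by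
  refine ⟨fun h x => ?_, fun h x y => by rw [h, mul_add]⟩
  simpa [mul_add] using (h x 1).symm

theorem Units.val_pow_eq_val_iff_modEq {M : Type*} [Monoid M] (u : Mˣ) (k : ℕ) :
    (u : M) ^ k = u ↔ k ≡ 1 [MOD orderOf u] := by
  rw [← pow_eq_pow_iff_modEq, pow_one, ← Units.val_pow_eq_pow_val, Units.val_inj]

theorem forall_pow_val_eq_one_iff {M : Type*} [Monoid M] {n : ℕ} [NeZero n] {g : M}
    (hg : g ^ n = 1) : (∀ x : ZMod n, g ^ x.val = 1) ↔ g = 1 := by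
  refine ⟨fun h => ?_, fun h x => by rw [h, one_pow]⟩
  obtain ⟨k, rfl⟩ := Nat.exists_eq_succ_of_ne_zero (NeZero.ne n)
  have hgk : g ^ k = 1 := by simpa only [ZMod.val_neg_one] using h (-1)
  rwa [pow_succ, hgk, one_mul] at hg

namespace ZMod

theorem val_modEq_one_iff_castHom_eq_one {m n : ℕ} [NeZero n] (h : m ∣ n) (a : ZMod n) :
    a.val ≡ 1 [MOD m] ↔ castHom h (ZMod m) a = 1 := by
  rw [← natCast_eq_natCast_iff, natCast_val, Nat.cast_one, castHom_apply]

theorem unitsMap_unitOfCoprime_eq_one_iff {m n r : ℕ} (hr : r.Coprime n) (h : m ∣ n) :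
    unitsMap h (unitOfCoprime r hr) = 1 ↔ r ≡ 1 [MOD m] := by
  rw [Units.ext_iff, unitsMap_val, coe_unitOfCoprime, cast_natCast h, Units.val_one,
    ← Nat.cast_one, natCast_eq_natCast_iff]

theorem forall_val_inv_pow_val_modEq_one_iff {m n : ℕ} [NeZero n] {u : (ZMod n)ˣ}
    (hu : u ^ n = 1) (h : m ∣ n) :
    (∀ x : ZMod n, ((u⁻¹ ^ x.val : (ZMod n)ˣ) : ZMod n).val ≡ 1 [MOD m]) ↔
      unitsMap h u = 1 := by
  have hpow : (unitsMap h u)⁻¹ ^ n = 1 := by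
    rw [← map_inv, ← map_pow, inv_pow, hu, inv_one, map_one]
  have hcast (w : (ZMod n)ˣ) : castHom h (ZMod m) w = (unitsMap h w : ZMod m) := rfl
  simp only [val_modEq_one_iff_castHom_eq_one h, hcast, Units.val_eq_one, map_pow, map_inv,
    forall_pow_val_eq_one_iff hpow, inv_eq_one]

end ZMod

/-- Let `φ : x ↦ rx` be an automorphism of `ℤ_n` (with `gcd(r,n) = 1`) of order `m`
(the multiplicative order of `r` mod `n`). Then `φ` is a symmetric skew-morphism of
`ℤ_n` — i.e. `m ∣ n` and `π(x) = −φ^{−x}(−1)` is a power function for `φ` — if and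
only if `m ∣ n` and `r ≡ 1 (mod m)`. -/
theorem automorphism_symmetric_iff (n : ℕ) (hn : 0 < n) (r : ℕ)
    (hr : Nat.Coprime r n) (m : ℕ)
    (hm : m = orderOf (ZMod.unitOfCoprime r hr)) :
    (m ∣ n ∧
      ∀ x y : ZMod n,
        (r : ZMod n) * (x + y) =
          (r : ZMod n) * x +
            (fun z : ZMod n => (r : ZMod n) * z)^[
              (-((((ZMod.unitOfCoprime r hr)⁻¹ ^ x.val : (ZMod n)ˣ) : ZMod n) * (-1))).val] y)
    ↔ (m ∣ n ∧ r ≡ 1 [MOD m]) := by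
  have : NeZero n := ⟨hn.ne'⟩
  subst hm
  refine and_congr_right fun hdvd => ?_
  simp only [mul_left_iterate_apply, mul_neg_one, neg_neg]
  rw [forall_mul_add_eq_mul_add_pow_mul_iff, ← ZMod.unitsMap_unitOfCoprime_eq_one_iff hr hdvd,
    ← ZMod.forall_val_inv_pow_val_modEq_one_iff (orderOf_dvd_iff_pow_eq_one.mp hdvd) hdvd]
  simp only [← ZMod.coe_unitOfCoprime r hr, Units.val_pow_eq_val_iff_modEq]
end

section
/- Let G be a finite group with a normal Sylow p-subgroup P, where G = ⟨a⟩⟨b⟩ with |a| = m, |b| = n, p divides m exactly to the power p^e (m = p^e·m₁ with p ∤ m₁), p does not divide n, P ⊆ ⟨a⟩, and gcd(n, φ(m)) = 1. Then P is contained in the centre of G. -/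
/-- Case 1 of the proof of the uniqueness theorem: if `G = ⟨a⟩⟨b⟩` with `|a| = m`,
`|b| = n`, the normal Sylow `p`-subgroup `P` of `G` is contained in `⟨a⟩`, where
`m = p^e·m₁` with `p ∤ m₁`, `p ∤ n`, and `gcd(n, φ(m)) = 1`, then `P` lies in the
centre of `G`. -/
theorem sylow_central_case1 (G : Type*) [Group G] [Finite G]
    (p : ℕ) [Fact p.Prime] (P : Sylow p G) (hPnormal : (P : Subgroup G).Normal)
    (a b : G) (m n : ℕ) (hm : orderOf a = m) (hn : orderOf b = n)
    (hfact : ∀ g : G, ∃ i j : ℤ, g = a ^ i * b ^ j)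
    (e m₁ : ℕ) (hdecomp : m = p ^ e * m₁) (hpm₁ : ¬ p ∣ m₁) (hpn : ¬ p ∣ n)
    (hPa : (P : Subgroup G) ≤ Subgroup.zpowers a)
    (hgcd : Nat.gcd n (Nat.totient m) = 1) :
    (P : Subgroup G) ≤ Subgroup.center G := by
  have hza : IsCyclic (Subgroup.zpowers a) := by
    refine ⟨⟨a, Subgroup.mem_zpowers a⟩, ?_⟩
    rintro ⟨x, k, rfl⟩
    exact ⟨k, Subtype.ext (by push_cast; rfl)⟩
  have hcyc : IsCyclic (P : Subgroup G) :=
    Subgroup.isCyclic_of_le hPa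
  -- the conjugation automorphism of P induced by b is trivial
  have hf : MulAut.conjNormal (H := (P : Subgroup G)) b = 1 := by
    set f := MulAut.conjNormal (H := (P : Subgroup G)) b with hfdef
    have h1 : orderOf f ∣ n := by
      rw [← hn]; exact orderOf_map_dvd _ b
    have h2 : orderOf f ∣ Nat.card (MulAut (P : Subgroup G)) :=
      orderOf_dvd_natCard f
    have hcardP : Nat.card (P : Subgroup G) ∣ m := by
      rw [← hm, ← Nat.card_zpowers]
      exact Subgroup.card_dvd_of_le hPa
    rw [IsCyclic.card_mulAut] at h2
    have h3 : orderOf f ∣ Nat.totient m :=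
      h2.trans (Nat.totient_dvd_of_dvd hcardP)
    have : orderOf f ∣ 1 := hgcd ▸ Nat.dvd_gcd h1 h3
    exact orderOf_eq_one_iff.mp (Nat.dvd_one.mp this)
  intro x hx
  rw [Subgroup.mem_center_iff]
  have hxb : b * x = x * b := by
    have := congrArg (fun g => ((g ⟨x, hx⟩ : (P : Subgroup G)) : G)) hf
    simp only [MulAut.conjNormal_apply, MulAut.one_apply] at this
    calc b * x = (b * x * b⁻¹) * b := by group
      _ = x * b := by rw [this]
  have hxa : a * x = x * a := by
    obtain ⟨k, hk⟩ := hPa hx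
    rw [← hk]
    group
  intro g
  obtain ⟨i, j, rfl⟩ := hfact g
  have hxa' : a ^ i * x = x * a ^ i := (Commute.zpow_left hxa i).eq
  have hxb' : b ^ j * x = x * b ^ j := (Commute.zpow_left hxb j).eq
  calc a ^ i * b ^ j * x = a ^ i * (x * b ^ j) := by rw [mul_assoc, hxb']
    _ = x * (a ^ i * b ^ j) := by rw [← mul_assoc, hxa', mul_assoc]
end

section
/- Let G be a finite group generated by elements a and b with G = ⟨a⟩⟨b⟩, ⟨a⟩ ∩ ⟨b⟩ = 1, |a| = m, |b| = n. Suppose θ: G → G is an automorphism with θ(a) = b and θ(b) = a. Then m = n and the two induced skew-morphisms coincide: the skew-morphism φ of ℤ_n induced by a (via a·b^x = b^{φ(x)}·a^{π(x)}) equals the skew-morphism φ* of ℤ_m induced by b (via b·a^y = a^{φ*(y)}·b^{π*(y)}). -/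
/-! Since `θ` swaps `a` and `b`, they have the same order. Applying `θ` to
`a * b ^ x = b ^ φ x * a ^ π x` gives `b * a ^ x = a ^ φ x * b ^ π x`, while the definition of
`φ*` gives `b * a ^ x = a ^ φ* x * b ^ π* x`; as `⟨a⟩ ∩ ⟨b⟩ = 1`, the `⟨a⟩`-factors agree, so
`a ^ φ x = a ^ φ* x`, which determines the exponent in `ZMod (orderOf a)`. -/

-- No `NeZero n`: on `ZMod 0 = ℤ` the value is `natAbs`, and `% 0` is the identity.
theorem ZMod.val_mod {n : ℕ} (x : ZMod n) : x.val % n = x.val := by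
  rcases n with _ | n
  · exact Nat.mod_zero _
  · exact Nat.mod_eq_of_lt x.val_lt

theorem ZMod.val_eq_of_pow_val_eq {M : Type*} [LeftCancelMonoid M] {g : M}
    {x y : ZMod (orderOf g)} (h : g ^ x.val = g ^ y.val) : x.val = y.val := by
  rwa [pow_inj_mod, ZMod.val_mod, ZMod.val_mod] at h

theorem Subgroup.eq_of_mul_eq_mul_of_disjoint {G : Type*} [Group G] {H K : Subgroup G}
    (hHK : Disjoint H K) {h₁ h₂ k₁ k₂ : G} (hh₁ : h₁ ∈ H) (hh₂ : h₂ ∈ H) (hk₁ : k₁ ∈ K)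
    (hk₂ : k₂ ∈ K) (h : h₁ * k₁ = h₂ * k₂) : h₁ = h₂ :=
  congrArg (fun p : H × K => (p.1 : G))
    (mul_injective_of_disjoint hHK (a₁ := (⟨h₁, hh₁⟩, ⟨k₁, hk₁⟩)) (a₂ := (⟨h₂, hh₂⟩, ⟨k₂, hk₂⟩)) h)

theorem transposing_automorphism_symmetric_general (G : Type*) [Group G]
    (a b : G) (m n : ℕ) (hm : orderOf a = m) (hn : orderOf b = n)
    (hint : Subgroup.zpowers a ⊓ Subgroup.zpowers b = ⊥)
    (θ : G ≃* G) (hθa : θ a = b) (hθb : θ b = a)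
    (φ : ZMod n → ZMod n) (π : ZMod n → ZMod m)
    (hφ : ∀ x : ZMod n, a * b ^ x.val = b ^ (φ x).val * a ^ (π x).val)
    (φs : ZMod m → ZMod m) (πs : ZMod m → ZMod n)
    (hφs : ∀ y : ZMod m, b * a ^ y.val = a ^ (φs y).val * b ^ (πs y).val) :
    m = n ∧ ∀ x : ℕ, (φ (x : ZMod n)).val = (φs (x : ZMod m)).val := by
  have hmn : m = n := by rw [← hm, ← hn, ← hθa, MulEquiv.orderOf_eq]
  subst hmn hm
  refine ⟨rfl, fun x => ?_⟩
  have hθφ : b * a ^ (x : ZMod (orderOf a)).val = a ^ (φ x).val * b ^ (π x).val := by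
    simpa [hθa, hθb] using congrArg θ (hφ x)
  have hpow : a ^ (φ x).val = a ^ (φs x).val :=
    Subgroup.eq_of_mul_eq_mul_of_disjoint (disjoint_iff.mpr hint)
      (pow_mem (Subgroup.mem_zpowers a) _) (pow_mem (Subgroup.mem_zpowers a) _)
      (pow_mem (Subgroup.mem_zpowers b) _) (pow_mem (Subgroup.mem_zpowers b) _)
      (hθφ.symm.trans (hφs x))
  exact ZMod.val_eq_of_pow_val_eq hpow

/-- If an exact bicyclic group `G = ⟨a⟩⟨b⟩` admits an automorphism transposing `a`
and `b`, then `m = n` and the two induced skew-morphisms `φ` (induced by `a`) and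
`φ*` (induced by `b`) coincide. -/
theorem transposing_automorphism_symmetric (G : Type*) [Group G] [Finite G]
    (a b : G) (m n : ℕ) (hm : orderOf a = m) (hn : orderOf b = n)
    (hmpos : 0 < m) (hnpos : 0 < n)
    (hfact : ∀ g : G, ∃ i j : ℤ, g = a ^ i * b ^ j)
    (hint : Subgroup.zpowers a ⊓ Subgroup.zpowers b = ⊥)
    (θ : G ≃* G) (hθa : θ a = b) (hθb : θ b = a)
    (φ : ZMod n → ZMod n) (π : ZMod n → ZMod m)
    (hφ : ∀ x : ZMod n, a * b ^ x.val = b ^ (φ x).val * a ^ (π x).val)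
    (φs : ZMod m → ZMod m) (πs : ZMod m → ZMod n)
    (hφs : ∀ y : ZMod m, b * a ^ y.val = a ^ (φs y).val * b ^ (πs y).val) :
    m = n ∧ ∀ x : ℕ, (φ (x : ZMod n)).val = (φs (x : ZMod m)).val :=
  transposing_automorphism_symmetric_general G a b m n hm hn hint θ hθa hθb φ π hφ φs πs hφs
end
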